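/- Let A be the graded vector space over a field K with A_0 = K·1, A_1 = K·x ⊕ K·y, A_2 = K·X ⊕ K·Y, A_3 = K·ξ, and zero otherwise. Define m_2 by: 1 is a two-sided unit; m_2(x,X) = -ξ = m_2(y,Y); m_2(X,x) = ξ = m_2(Y,y); m_2(x,x) = λ_{30}X + λ_{21}Y, m_2(x,y) = m_2(y,x) = λ_{21}X + λ_{12}Y, m_2(y,y) = λ_{12}X + λ_{03}Y; and all other products of basis elements in positive degrees are zero. Then m_2 is associative on A; i.e., (A, m_2) is a graded associative unital algebra. -/

import Mathlib

noncomputable section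

/-- Basis elements of the graded vector space `A = A₀ ⊕ A₁ ⊕ A₂ ⊕ A₃`. -/
inductive Bas | one | x | y | X | Y | xi
deriving DecidableEq

/-- Degrees of the basis elements. -/
def deg : Bas → ℕ
  | .one => 0
  | .x => 1
  | .y => 1
  | .X => 2
  | .Y => 2
  | .xi => 3

/-- The underlying vector space, with basis `Bas`. -/
abbrev V (K : Type*) [Field K] := Bas →₀ K

variable (K : Type*) [Field K]

/-- Basis vectors. -/
def e (b : Bas) : V K := Finsupp.single b 1

/-- The product `m₂` on basis elements: `1` is a two-sided unit;
`m₂(x,X) = -ξ = m₂(y,Y)`, `m₂(X,x) = ξ = m₂(Y,y)`;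
`m₂(x,x) = λ₃₀X + λ₂₁Y`, `m₂(x,y) = m₂(y,x) = λ₂₁X + λ₁₂Y`,
`m₂(y,y) = λ₁₂X + λ₀₃Y`; all other products of basis elements of positive degree
vanish. -/
def mu (l30 l21 l12 l03 : K) : Bas → Bas → V K
  | .one, b => e K b
  | a, .one => e K a
  | .x, .x => l30 • e K .X + l21 • e K .Y
  | .x, .y => l21 • e K .X + l12 • e K .Y
  | .y, .x => l21 • e K .X + l12 • e K .Y
  | .y, .y => l12 • e K .X + l03 • e K .Y
  | .x, .X => -(e K .xi)
  | .y, .Y => -(e K .xi)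
  | .X, .x => e K .xi
  | .Y, .y => e K .xi
  | _, _ => 0

/-- The bilinear extension of `mu` to `V`. -/
def m2 (l30 l21 l12 l03 : K) : V K →ₗ[K] V K →ₗ[K] V K :=
  Finsupp.lsum K fun a =>
    LinearMap.toSpanSingleton K (V K →ₗ[K] V K)
      (Finsupp.lsum K fun b => LinearMap.toSpanSingleton K (V K) (mu K l30 l21 l12 l03 a b))

/-! The product respects the grading by `deg`, and `A` vanishes above degree 3, so for
positive-degree `a, b, c` both sides of the identity vanish unless `a, b, c ∈ {x, y}`. In the
remaining eight cases `m₂(a, b)` lies in `span {X, Y}`, and the sign `(-1)^{|a|} = -1` comes from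
`m₂(x, X) = -m₂(X, x)` and `m₂(y, Y) = -m₂(Y, y)`. -/


section Grading

def homogeneousPart (n : ℕ) : Submodule K (V K) := Finsupp.supported K K {b | deg b = n}

lemma deg_le_three (b : Bas) : deg b ≤ 3 := by
  cases b <;> simp [deg]

lemma deg_eq_one_iff {b : Bas} : deg b = 1 ↔ b = .x ∨ b = .y := by
  cases b <;> simp [deg]

lemma homogeneousPart_eq_bot {n : ℕ} (hn : 3 < n) : homogeneousPart K n = ⊥ := by
  have : {b | deg b = n} = ∅ :=
    Set.eq_empty_of_forall_notMem fun b (hb : deg b = n) => by have := deg_le_three b; omega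
  rw [homogeneousPart, this, Finsupp.supported_empty]

lemma homogeneousPart_eq_span (n : ℕ) :
    homogeneousPart K n = Submodule.span K (e K '' {b | deg b = n}) :=
  Finsupp.supported_eq_span_single K _

variable {K}

lemma e_mem_homogeneousPart_iff {b : Bas} {n : ℕ} :
    e K b ∈ homogeneousPart K n ↔ deg b = n := by
  simp [homogeneousPart, e, Finsupp.mem_supported]

lemma e_mem_homogeneousPart (b : Bas) : e K b ∈ homogeneousPart K (deg b) :=
  e_mem_homogeneousPart_iff.mpr rfl

end Grading

section Product

variable {K} (l30 l21 l12 l03 : K)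

lemma m2_e_e (a b : Bas) :
    m2 K l30 l21 l12 l03 (e K a) (e K b) = mu K l30 l21 l12 l03 a b := by
  simp [m2, e, Finsupp.lsum_single, LinearMap.toSpanSingleton_apply]

lemma m2_e_one_left : m2 K l30 l21 l12 l03 (e K .one) = LinearMap.id :=
  Finsupp.basisSingleOne.ext fun b => m2_e_e l30 l21 l12 l03 .one b

lemma m2_e_one_right : (m2 K l30 l21 l12 l03).flip (e K .one) = LinearMap.id :=
  Finsupp.basisSingleOne.ext fun b =>
    (m2_e_e l30 l21 l12 l03 b .one).trans (by cases b <;> rfl)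

lemma mu_mem_homogeneousPart (a b : Bas) :
    mu K l30 l21 l12 l03 a b ∈ homogeneousPart K (deg a + deg b) := by
  cases a <;> cases b <;> simp [mu, deg, e_mem_homogeneousPart_iff, add_mem, Submodule.smul_mem]

lemma m2_mem_homogeneousPart {i j : ℕ} {v w : V K} (hv : v ∈ homogeneousPart K i)
    (hw : w ∈ homogeneousPart K j) :
    m2 K l30 l21 l12 l03 v w ∈ homogeneousPart K (i + j) := by
  suffices Submodule.map₂ (m2 K l30 l21 l12 l03) (homogeneousPart K i) (homogeneousPart K j) ≤
      homogeneousPart K (i + j) from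
    Submodule.map₂_le.mp this v hv w hw
  rw [homogeneousPart_eq_span K i, homogeneousPart_eq_span K j, Submodule.map₂_span_span,
    Submodule.span_le]
  rintro _ ⟨_, ⟨a, rfl, rfl⟩, _, ⟨b, rfl, rfl⟩, rfl⟩
  simpa only [m2_e_e, SetLike.mem_coe] using mu_mem_homogeneousPart l30 l21 l12 l03 a b

lemma m2_eq_zero_of_three_lt_add {i j : ℕ} {v w : V K} (hv : v ∈ homogeneousPart K i)
    (hw : w ∈ homogeneousPart K j) (hij : 3 < i + j) : m2 K l30 l21 l12 l03 v w = 0 := by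
  simpa [homogeneousPart_eq_bot K hij] using m2_mem_homogeneousPart l30 l21 l12 l03 hv hw

lemma m2_m2_eq_neg_of_deg_eq_one {a b c : Bas} (ha : deg a = 1) (hb : deg b = 1)
    (hc : deg c = 1) :
    m2 K l30 l21 l12 l03 (m2 K l30 l21 l12 l03 (e K a) (e K b)) (e K c) =
      -m2 K l30 l21 l12 l03 (e K a) (m2 K l30 l21 l12 l03 (e K b) (e K c)) := by
  obtain rfl | rfl := deg_eq_one_iff.mp ha <;> obtain rfl | rfl := deg_eq_one_iff.mp hb <;>
    obtain rfl | rfl := deg_eq_one_iff.mp hc <;> simp [m2_e_e, mu]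

end Product

/-- `1` is a two-sided unit for `m₂`, and on elements of positive degree `m₂`
satisfies the (signed, Koszul-corrected) associativity
`m₂(m₂(a,b),c) = (-1)^{|a|} m₂(a, m₂(b,c))`, which is the A_∞-relation for the
structure with `m_n = 0` for `n ≠ 2`. -/
theorem stmt14 (l30 l21 l12 l03 : K) :
    (∀ v : V K, m2 K l30 l21 l12 l03 (e K .one) v = v ∧
      m2 K l30 l21 l12 l03 v (e K .one) = v) ∧
    (∀ a b c : Bas, 1 ≤ deg a → 1 ≤ deg b → 1 ≤ deg c →
      m2 K l30 l21 l12 l03 (m2 K l30 l21 l12 l03 (e K a) (e K b)) (e K c) =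
        ((-1 : K) ^ deg a) •
          m2 K l30 l21 l12 l03 (e K a) (m2 K l30 l21 l12 l03 (e K b) (e K c))) := by
  refine ⟨fun v => ⟨?_, ?_⟩, fun a b c ha hb hc => ?_⟩
  · exact LinearMap.congr_fun (m2_e_one_left l30 l21 l12 l03) v
  · exact LinearMap.congr_fun (m2_e_one_right l30 l21 l12 l03) v
  by_cases h : deg a = 1 ∧ deg b = 1 ∧ deg c = 1
  · obtain ⟨ha, hb, hc⟩ := h
    rw [ha, pow_one, neg_one_smul]
    exact m2_m2_eq_neg_of_deg_eq_one l30 l21 l12 l03 ha hb hc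
  · have hab := m2_mem_homogeneousPart l30 l21 l12 l03 (e_mem_homogeneousPart (K := K) a)
      (e_mem_homogeneousPart b)
    have hbc := m2_mem_homogeneousPart l30 l21 l12 l03 (e_mem_homogeneousPart (K := K) b)
      (e_mem_homogeneousPart c)
    rw [m2_eq_zero_of_three_lt_add l30 l21 l12 l03 hab (e_mem_homogeneousPart c) (by omega),
      m2_eq_zero_of_three_lt_add l30 l21 l12 l03 (e_mem_homogeneousPart a) hbc (by omega),
      smul_zero]
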